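/- arXiv:2005.05771 — 2 statements merged into one kernel-verified Lean document; each statement's English description precedes it below -/
import Mathlib

section
/- On L²([0,1]^d): (i) the operators 𝐓²(𝐈 − 𝐏)(𝐓*)² (the covariance operator of the left-integrated pinned Brownian sheet 𝐁^[0]) and (𝐈 − 𝐏)𝐓²(𝐓*)²(𝐈 − 𝐏) (the covariance operator of the centered left-integrated Brownian sheet) have the same nonzero eigenvalues with multiplicities; (ii) likewise, 𝐓*𝐓(𝐈 − 𝐏)𝐓*𝐓 (the covariance operator of the right-integrated pinned Brownian sheet 𝐁^[1]) and (𝐈 − 𝐏)𝐓*𝐓𝐓*𝐓(𝐈 − 𝐏) (the covariance operator of the centered right-integrated Brownian sheet) have the same nonzero eigenvalues with multiplicities. -/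
/-!
For bounded operators `A`, `B` and `λ ≠ 0`, `B` maps the generalized `λ`-eigenspaces of `AB`
injectively into those of `BA`, so `AB` and `BA` have the same nonzero eigenvalues with
multiplicities. Since `𝐐 = 𝐈 - 𝐏` is idempotent, `A𝐐B = (A𝐐)(𝐐B)` is then equivalent to `𝐐BA𝐐`:
this is (ii), and it turns the first operator of (i) into `𝐐(𝐓*)²𝐓²𝐐`. The reflection
`x ↦ 1 - x` of the cube induces an involution `R` of `L²` with `R𝐓 = 𝐓*R` and `R𝐏 = 𝐏R`, and
conjugating by `R` carries `𝐐(𝐓*)²𝐓²𝐐` to `𝐐𝐓²(𝐓*)²𝐐`.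
-/

open MeasureTheory

noncomputable section

/-- Lebesgue measure on the cube `[0,1]^d`, as a measure on `ℝ^d`. -/
def cubeMeasure (d : ℕ) : Measure (Fin d → ℝ) :=
  Measure.pi fun _ => volume.restrict (Set.Icc (0:ℝ) 1)

/-- `A` and `B` have the same nonzero eigenvalues with multiplicities. -/
def SameNonzeroEigenvalues {H : Type*} [NormedAddCommGroup H] [NormedSpace ℂ H]
    (A B : H →L[ℂ] H) : Prop :=
  ∀ l : ℂ, l ≠ 0 → ∀ m : ℕ, 1 ≤ m →
    Module.rank ℂ (LinearMap.ker (((A - l • 1) ^ m : H →L[ℂ] H) : H →ₗ[ℂ] H)) =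
    Module.rank ℂ (LinearMap.ker (((B - l • 1) ^ m : H →L[ℂ] H) : H →ₗ[ℂ] H))

section SameNonzeroEigenvalues

variable {H : Type*} [NormedAddCommGroup H] [NormedSpace ℂ H]

theorem SameNonzeroEigenvalues.symm {A B : H →L[ℂ] H} (h : SameNonzeroEigenvalues A B) :
    SameNonzeroEigenvalues B A :=
  fun l hl m hm => (h l hl m hm).symm

theorem SameNonzeroEigenvalues.trans {A B C : H →L[ℂ] H} (hAB : SameNonzeroEigenvalues A B)
    (hBC : SameNonzeroEigenvalues B C) : SameNonzeroEigenvalues A C :=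
  fun l hl m hm => (hAB l hl m hm).trans (hBC l hl m hm)

theorem semiconjBy_mul_sub_smul_one (A B : H →L[ℂ] H) (l : ℂ) :
    SemiconjBy B (A * B - l • 1) (B * A - l • 1) := by
  simp only [SemiconjBy, mul_sub, sub_mul, mul_smul_comm, smul_mul_assoc, mul_one, one_mul,
    mul_assoc]

theorem rank_ker_pow_mul_sub_smul_one_le (A B : H →L[ℂ] H) {l : ℂ} (hl : l ≠ 0) (m : ℕ) :
    Module.rank ℂ (LinearMap.ker (((A * B - l • 1) ^ m : H →L[ℂ] H) : H →ₗ[ℂ] H)) ≤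
      Module.rank ℂ (LinearMap.ker (((B * A - l • 1) ^ m : H →L[ℂ] H) : H →ₗ[ℂ] H)) := by
  have hB := (semiconjBy_mul_sub_smul_one A B l).pow_right m
  have hmaps : ∀ x ∈ LinearMap.ker (((A * B - l • 1) ^ m : H →L[ℂ] H) : H →ₗ[ℂ] H),
      B x ∈ LinearMap.ker (((B * A - l • 1) ^ m : H →L[ℂ] H) : H →ₗ[ℂ] H) := by
    intro x hx
    rw [LinearMap.mem_ker, ContinuousLinearMap.coe_coe] at hx ⊢
    rw [← mul_apply_eq_comp, ← hB.eq, mul_apply_eq_comp, hx, map_zero]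
  refine LinearMap.rank_le_of_injective ((B : H →ₗ[ℂ] H).restrict hmaps)
    ((injective_iff_map_eq_zero _).2 fun x hx => ?_)
  have hBx : B x = 0 := congrArg Subtype.val hx
  have hpow : ∀ n : ℕ, ((A * B - l • 1) ^ n) x = (-l) ^ n • (x : H) := by
    intro n
    induction n with
    | zero => simp
    | succ n ih =>
      simp only [pow_succ, mul_apply_eq_comp, sub_apply, smul_apply, one_apply_eq_self, hBx,
        map_zero, zero_sub, ← neg_smul, map_smul, ih, smul_smul, mul_comm]
  have hx0 : (-l) ^ m • (x : H) = 0 := by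
    rw [← hpow]
    exact x.2
  exact Subtype.ext ((smul_eq_zero.1 hx0).resolve_left (pow_ne_zero _ (neg_ne_zero.2 hl)))

theorem sameNonzeroEigenvalues_mul_comm (A B : H →L[ℂ] H) :
    SameNonzeroEigenvalues (A * B) (B * A) :=
  fun _ hl m _ => le_antisymm (rank_ker_pow_mul_sub_smul_one_le A B hl m)
    (rank_ker_pow_mul_sub_smul_one_le B A hl m)

theorem sameNonzeroEigenvalues_mul_mul_of_isIdempotentElem {Q : H →L[ℂ] H}
    (hQ : IsIdempotentElem Q) (A B : H →L[ℂ] H) :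
    SameNonzeroEigenvalues (A * Q * B) (Q * B * A * Q) := by
  have h := sameNonzeroEigenvalues_mul_comm (A * Q) (Q * B)
  rwa [mul_assoc, ← mul_assoc Q, hQ.eq, ← mul_assoc, ← mul_assoc] at h

theorem SemiconjBy.swap_of_mul_self_eq_one {M : Type*} [Monoid M] {r x y : M} (hr : r * r = 1)
    (h : SemiconjBy r x y) : SemiconjBy r y x := by
  calc r * y = r * (y * (r * r)) := by rw [hr, mul_one]
    _ = r * (r * x) * r := by rw [← mul_assoc y, ← h.eq, mul_assoc, mul_assoc, mul_assoc]
    _ = x * r := by rw [← mul_assoc, hr, one_mul]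

theorem SemiconjBy.sameNonzeroEigenvalues_of_mul_self_eq_one {R X Y : H →L[ℂ] H} (hR : R * R = 1)
    (h : SemiconjBy R X Y) : SameNonzeroEigenvalues X Y := by
  have hY : R * X * R = Y := by rw [h.eq, mul_assoc, hR, mul_one]
  have hX : R * (R * X) = X := by rw [← mul_assoc, hR, one_mul]
  have := sameNonzeroEigenvalues_mul_comm (R * X) R
  rw [hY, hX] at this
  exact this.symm

end SameNonzeroEigenvalues

section Reflection

variable {G : Type*} [AddCommGroup G] [MeasurableSpace G]
  {E : Type*} [NormedAddCommGroup E] [NormedSpace ℂ E] {p : ENNReal} [Fact (1 ≤ p)]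
  {μ : Measure G} {a : G}

variable (E p) in
def reflectionCLM (hμ : MeasurePreserving (a - ·) μ μ) : Lp E p μ →L[ℂ] Lp E p μ :=
  (Lp.compMeasurePreservingₗᵢ ℂ _ hμ).toContinuousLinearMap

theorem coeFn_reflectionCLM (hμ : MeasurePreserving (a - ·) μ μ) (u : Lp E p μ) :
    reflectionCLM E p hμ u =ᵐ[μ] fun x => u (a - x) :=
  Lp.coeFn_compMeasurePreserving u hμ

theorem reflectionCLM_mul_self (hμ : MeasurePreserving (a - ·) μ μ) :
    reflectionCLM E p hμ * reflectionCLM E p hμ = 1 := by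
  have h_id : ∀ {f : G → G} (hf : MeasurePreserving f μ μ) (u : Lp E p μ),
      f = id → Lp.compMeasurePreserving f hf u = u := by
    rintro f hf u rfl
    exact Lp.compMeasurePreserving_id_apply u
  ext1 u
  exact (Lp.compMeasurePreserving_comp_apply u hμ hμ).symm.trans
    (h_id _ u (funext (sub_sub_cancel a)))

theorem integral_reflectionCLM [MeasurableAdd G] [MeasurableNeg G]
    (hμ : MeasurePreserving (a - ·) μ μ) (u : Lp E p μ) :
    ∫ x, reflectionCLM E p hμ u x ∂μ = ∫ x, u x ∂μ := by
  rw [integral_congr_ae (coeFn_reflectionCLM hμ u)]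
  exact hμ.integral_comp (measurableEmbedding_subLeft a) _

theorem commute_reflectionCLM_of_ae_eq_integral [MeasurableAdd G] [MeasurableNeg G]
    (hμ : MeasurePreserving (a - ·) μ μ) {P : Lp E p μ →L[ℂ] Lp E p μ}
    (hP : ∀ u : Lp E p μ, ∀ᵐ x ∂μ, P u x = ∫ y, u y ∂μ) :
    Commute (reflectionCLM E p hμ) P := by
  ext1 u
  refine Lp.ext ?_
  filter_upwards [coeFn_reflectionCLM hμ (P u), hμ.quasiMeasurePreserving.ae (hP u),
    hP (reflectionCLM E p hμ u)] with x hRPu hPu hPRu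
  rw [mul_apply_eq_comp, mul_apply_eq_comp, hRPu, hPu, hPRu, integral_reflectionCLM]

theorem semiconjBy_reflectionCLM [PartialOrder G] [IsOrderedAddMonoid G] [MeasurableAdd G]
    [MeasurableNeg G] (hμ : MeasurePreserving (a - ·) μ μ) {T T' : Lp E p μ →L[ℂ] Lp E p μ}
    (hT : ∀ u : Lp E p μ, ∀ᵐ x ∂μ, T u x = ∫ y in Set.Icc 0 x, u y ∂μ)
    (hT' : ∀ u : Lp E p μ, ∀ᵐ x ∂μ, T' u x = ∫ y in Set.Icc x a, u y ∂μ) :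
    SemiconjBy (reflectionCLM E p hμ) T T' := by
  have h_reflect : ∀ (u : Lp E p μ) (x : G),
      ∫ y in Set.Icc x a, reflectionCLM E p hμ u y ∂μ = ∫ y in Set.Icc 0 (a - x), u y ∂μ := by
    intro u x
    have hIcc : (a - ·) ⁻¹' Set.Icc 0 (a - x) = Set.Icc x a := by
      rw [Set.preimage_const_sub_Icc, sub_sub_cancel, sub_zero]
    rw [integral_congr_ae (ae_restrict_of_ae (coeFn_reflectionCLM hμ u)), ← hIcc,
      hμ.setIntegral_preimage_emb (measurableEmbedding_subLeft a)]
  ext1 u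
  refine Lp.ext ?_
  filter_upwards [coeFn_reflectionCLM hμ (T u), hμ.quasiMeasurePreserving.ae (hT u),
    hT' (reflectionCLM E p hμ u)] with x hRTu hTu hT'Ru
  rw [mul_apply_eq_comp, mul_apply_eq_comp, hRTu, hTu, hT'Ru, h_reflect]

end Reflection

theorem isIdempotentElem_of_ae_eq_integral {α E : Type*} [MeasurableSpace α]
    [NormedAddCommGroup E] [NormedSpace ℂ E] [CompleteSpace E] {p : ENNReal} [Fact (1 ≤ p)]
    {μ : Measure α} [IsProbabilityMeasure μ] {P : Lp E p μ →L[ℂ] Lp E p μ}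
    (hP : ∀ u : Lp E p μ, ∀ᵐ x ∂μ, P u x = ∫ y, u y ∂μ) : IsIdempotentElem P := by
  ext1 u
  refine Lp.ext ?_
  have h_integral : ∫ y, P u y ∂μ = ∫ y, u y ∂μ := by
    rw [integral_congr_ae (hP u), integral_const, probReal_univ, one_smul]
  filter_upwards [hP (P u), hP u] with x hPPu hPu
  rw [mul_apply_eq_comp, hPPu, h_integral, hPu]

instance (d : ℕ) : IsProbabilityMeasure (cubeMeasure d) := by
  have : IsProbabilityMeasure (volume.restrict (Set.Icc (0 : ℝ) 1)) :=
    ⟨by simp [Real.volume_Icc]⟩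
  unfold cubeMeasure
  infer_instance

theorem measurePreserving_one_sub_cubeMeasure (d : ℕ) :
    MeasurePreserving (1 - ·) (cubeMeasure d) (cubeMeasure d) := by
  have h := (Measure.measurePreserving_sub_left volume (1 : ℝ)).restrict_preimage
    (measurableSet_Icc (a := (0 : ℝ)) (b := 1))
  rw [Set.preimage_const_sub_Icc, sub_zero, sub_self] at h
  exact measurePreserving_pi _ _ fun _ => h

theorem statement14_general (d : ℕ)
    (T Tstar P : Lp ℂ 2 (cubeMeasure d) →L[ℂ] Lp ℂ 2 (cubeMeasure d))
    (hT : ∀ u : Lp ℂ 2 (cubeMeasure d), ∀ᵐ x ∂(cubeMeasure d),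
      T u x = ∫ y in Set.Icc 0 x, u y ∂(cubeMeasure d))
    (hTstar : ∀ u : Lp ℂ 2 (cubeMeasure d), ∀ᵐ x ∂(cubeMeasure d),
      Tstar u x = ∫ y in Set.Icc x 1, u y ∂(cubeMeasure d))
    (hP : ∀ u : Lp ℂ 2 (cubeMeasure d), ∀ᵐ x ∂(cubeMeasure d),
      P u x = ∫ y, u y ∂(cubeMeasure d)) :
    SameNonzeroEigenvalues
      (T ∘L T ∘L (1 - P) ∘L Tstar ∘L Tstar)
      ((1 - P) ∘L T ∘L T ∘L Tstar ∘L Tstar ∘L (1 - P)) ∧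
    SameNonzeroEigenvalues
      (Tstar ∘L T ∘L (1 - P) ∘L Tstar ∘L T)
      ((1 - P) ∘L Tstar ∘L T ∘L Tstar ∘L T ∘L (1 - P)) := by
  have hQ : IsIdempotentElem (1 - P) := (isIdempotentElem_of_ae_eq_integral hP).one_sub
  have hμ := measurePreserving_one_sub_cubeMeasure d
  set R := reflectionCLM ℂ 2 hμ
  have hR : R * R = 1 := reflectionCLM_mul_self hμ
  have hRT : SemiconjBy R T Tstar := semiconjBy_reflectionCLM hμ hT hTstar
  have hRTstar : SemiconjBy R Tstar T := hRT.swap_of_mul_self_eq_one hR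
  have hRQ : Commute R (1 - P) :=
    (Commute.one_right R).sub_right (commute_reflectionCLM_of_ae_eq_integral hμ hP)
  constructor
  · have hconj : SemiconjBy R ((1 - P) * (Tstar * (Tstar * (T * (T * (1 - P))))))
        ((1 - P) * (T * (T * (Tstar * (Tstar * (1 - P)))))) :=
      SemiconjBy.mul_right hRQ <| hRTstar.mul_right <| hRTstar.mul_right <| hRT.mul_right <|
        hRT.mul_right hRQ
    have h := (sameNonzeroEigenvalues_mul_mul_of_isIdempotentElem hQ (T * T) (Tstar * Tstar)).trans
      (hconj.sameNonzeroEigenvalues_of_mul_self_eq_one hR)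
    simp only [mul_assoc] at h
    exact h
  · have h := sameNonzeroEigenvalues_mul_mul_of_isIdempotentElem hQ (Tstar * T) (Tstar * T)
    simp only [mul_assoc] at h
    exact h

/-- On `L²([0,1]^d)`: (i) `𝐓²(𝐈-𝐏)(𝐓*)²` (covariance of the left-integrated pinned
Brownian sheet) and `(𝐈-𝐏)𝐓²(𝐓*)²(𝐈-𝐏)` (covariance of the centered left-integrated
Brownian sheet) have the same nonzero eigenvalues with multiplicities; (ii) likewise
`𝐓*𝐓(𝐈-𝐏)𝐓*𝐓` and `(𝐈-𝐏)𝐓*𝐓𝐓*𝐓(𝐈-𝐏)` (the right-integrated versions). -/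
theorem statement14 (d : ℕ) (hd : 1 ≤ d)
    (T Tstar P : Lp ℂ 2 (cubeMeasure d) →L[ℂ] Lp ℂ 2 (cubeMeasure d))
    (hT : ∀ u : Lp ℂ 2 (cubeMeasure d), ∀ᵐ x ∂(cubeMeasure d),
      T u x = ∫ y in Set.Icc 0 x, u y ∂(cubeMeasure d))
    (hTstar : ∀ u : Lp ℂ 2 (cubeMeasure d), ∀ᵐ x ∂(cubeMeasure d),
      Tstar u x = ∫ y in Set.Icc x 1, u y ∂(cubeMeasure d))
    (hP : ∀ u : Lp ℂ 2 (cubeMeasure d), ∀ᵐ x ∂(cubeMeasure d),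
      P u x = ∫ y, u y ∂(cubeMeasure d)) :
    SameNonzeroEigenvalues
      (T ∘L T ∘L (1 - P) ∘L Tstar ∘L Tstar)
      ((1 - P) ∘L T ∘L T ∘L Tstar ∘L Tstar ∘L (1 - P)) ∧
    SameNonzeroEigenvalues
      (Tstar ∘L T ∘L (1 - P) ∘L Tstar ∘L T)
      ((1 - P) ∘L Tstar ∘L T ∘L Tstar ∘L T ∘L (1 - P)) :=
  statement14_general d T Tstar P hT hTstar hP
end
end

section
/- Let n ≥ 0, let T be the Volterra operator on L²(0,1), (Tu)(x) = ∫₀ˣ u(t) dt, with adjoint T*, and let P_⟨n⟩ be the orthogonal projection of L²(0,1) onto the subspace of polynomials of degree at most n. Then: (i) the operators (I − P_⟨n⟩) T^{n+1} (T*)^{n+1} (I − P_⟨n⟩) (the covariance operator of the n-th order detrended n-times integrated Wiener process) and T^{n+1} (I − P_⟨n⟩) (T*)^{n+1} (the covariance operator of the conditional 'bridged' n-times integrated Wiener process 𝔹ₙ) have the same nonzero eigenvalues with multiplicities; (ii) moreover T^{n+1} (I − P_⟨n⟩) (T*)^{n+1} = (T*)^{n+1} (I − P_⟨n⟩) T^{n+1}.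 -/
open MeasureTheory

noncomputable section

/-- Lebesgue measure on `[0,1]`, as a measure on `ℝ`. -/
def unitMeasure : Measure ℝ := volume.restrict (Set.Icc (0:ℝ) 1)

/-! ### Auxiliary algebraic lemmas -/

section Alg
variable {H : Type*} [NormedAddCommGroup H] [NormedSpace ℂ H]

lemma pow_mul_swap (X Y : H →L[ℂ] H) (l : ℂ) (m : ℕ) :
    (Y * X - l • 1) ^ m * Y = Y * (X * Y - l • 1) ^ m := by
  induction m with
  | zero => simp
  | succ m ih =>
    have key : (Y * X - l • 1) * Y = Y * (X * Y - l • 1) := by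
      simp only [sub_mul, mul_sub, smul_mul_assoc, mul_smul_comm, one_mul, mul_one, mul_assoc]
    rw [pow_succ, pow_succ, mul_assoc, key, ← mul_assoc, ih, mul_assoc]

lemma ker_scale (X Y : H →L[ℂ] H) (l : ℂ) (m : ℕ) {v : H} (hv : Y v = 0) :
    ((X * Y - l • 1) ^ m) v = (-l) ^ m • v := by
  induction m with
  | zero => simp
  | succ m ih =>
    rw [pow_succ, ContinuousLinearMap.mul_apply]
    have h1 : (X * Y - l • 1) v = (-l) • v := by
      simp [ContinuousLinearMap.sub_apply, ContinuousLinearMap.mul_apply, hv]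
    rw [h1, _root_.map_smul, ih, pow_succ, smul_smul, mul_comm]

lemma rank_ker_le (X Y : H →L[ℂ] H) (l : ℂ) (hl : l ≠ 0) (m : ℕ) :
    Module.rank ℂ (LinearMap.ker (((X * Y - l • 1) ^ m : H →L[ℂ] H) : H →ₗ[ℂ] H)) ≤
    Module.rank ℂ (LinearMap.ker (((Y * X - l • 1) ^ m : H →L[ℂ] H) : H →ₗ[ℂ] H)) := by
  have hmem : ∀ v ∈ LinearMap.ker (((X * Y - l • 1) ^ m : H →L[ℂ] H) : H →ₗ[ℂ] H),
      Y v ∈ LinearMap.ker (((Y * X - l • 1) ^ m : H →L[ℂ] H) : H →ₗ[ℂ] H) := by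
    intro v hv
    rw [LinearMap.mem_ker] at hv ⊢
    rw [ContinuousLinearMap.coe_coe] at hv ⊢
    have := congrArg (fun A : H →L[ℂ] H => A v) (pow_mul_swap X Y l m)
    simp only [ContinuousLinearMap.mul_apply] at this
    rw [this, hv, map_zero]
  refine LinearMap.rank_le_of_injective ((Y : H →ₗ[ℂ] H).restrict hmem) ?_
  intro ⟨v, hv⟩ ⟨w, hw⟩ h
  ext
  have h' : Y (v - w) = 0 := by
    have := congrArg Subtype.val h
    simp only [LinearMap.restrict_apply] at this
    simp only [map_sub, this, sub_self]
    exact sub_eq_zero_of_eq this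
  have hvw : v - w ∈ LinearMap.ker (((X * Y - l • 1) ^ m : H →L[ℂ] H) : H →ₗ[ℂ] H) :=
    sub_mem hv hw
  rw [LinearMap.mem_ker] at hvw
  rw [ContinuousLinearMap.coe_coe] at hvw
  rw [ker_scale X Y l m h'] at hvw
  have : v - w = 0 := by
    rcases smul_eq_zero.mp hvw with h0 | h0
    · exact absurd h0 (pow_ne_zero m (neg_ne_zero.mpr hl))
    · exact h0
  exact sub_eq_zero.mp this

lemma sameNonzero_mul_comm (X Y : H →L[ℂ] H) :
    SameNonzeroEigenvalues (X * Y) (Y * X) := by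
  intro l hl m _
  exact le_antisymm (rank_ker_le X Y l hl m) (rank_ker_le Y X l hl m)

end Alg

/-! ### Measure-theoretic preliminaries -/

open Set Polynomial

instance : IsFiniteMeasure unitMeasure :=
  ⟨by rw [unitMeasure, Measure.restrict_apply_univ]; exact measure_Icc_lt_top⟩

instance : NullSingletonClass unitMeasure := by rw [unitMeasure]; infer_instance

lemma ae_mem_unit : ∀ᵐ x ∂unitMeasure, x ∈ Icc (0:ℝ) 1 := by
  rw [unitMeasure]; exact ae_restrict_mem measurableSet_Icc

lemma Lp_integrable (u : Lp ℂ 2 unitMeasure) : Integrable u unitMeasure :=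
  MemLp.integrable (by norm_num) (Lp.memLp u)

lemma unit_restrict (s : Set ℝ) (hs : MeasurableSet s) :
    unitMeasure.restrict s = volume.restrict (s ∩ Icc 0 1) := by
  rw [unitMeasure, Measure.restrict_restrict hs]

lemma unit_restrict_Icc0 {x : ℝ} (hx : x ∈ Icc (0:ℝ) 1) :
    unitMeasure.restrict (Icc 0 x) = volume.restrict (Icc 0 x) := by
  rw [unit_restrict _ measurableSet_Icc, inter_eq_left.mpr (Icc_subset_Icc le_rfl hx.2)]

lemma unit_restrict_Icc1 {x : ℝ} (hx : x ∈ Icc (0:ℝ) 1) :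
    unitMeasure.restrict (Icc x 1) = volume.restrict (Icc x 1) := by
  rw [unit_restrict _ measurableSet_Icc, inter_eq_left.mpr (Icc_subset_Icc hx.1 le_rfl)]

lemma unit_restrict_Ici {x : ℝ} (hx : x ∈ Icc (0:ℝ) 1) :
    unitMeasure.restrict (Ici x) = unitMeasure.restrict (Icc x 1) := by
  rw [unit_restrict _ measurableSet_Ici, unit_restrict _ measurableSet_Icc]
  congr 1
  ext t
  simp only [mem_inter_iff, mem_Ici, mem_Icc]
  constructor
  · rintro ⟨h1, h2, h3⟩; exact ⟨⟨h1, h3⟩, h2, h3⟩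
  · rintro ⟨⟨h1, h3⟩, _⟩; exact ⟨h1, le_trans hx.1 h1, h3⟩

lemma unit_restrict_Iic {x : ℝ} (hx : x ∈ Icc (0:ℝ) 1) :
    unitMeasure.restrict (Iic x) = unitMeasure.restrict (Icc 0 x) := by
  rw [unit_restrict _ measurableSet_Iic, unit_restrict _ measurableSet_Icc]
  congr 1
  ext t
  simp only [mem_inter_iff, mem_Iic, mem_Icc]
  constructor
  · rintro ⟨h1, h2, h3⟩; exact ⟨⟨h2, h1⟩, h2, h3⟩
  · rintro ⟨⟨h2, h1⟩, _⟩; exact ⟨h1, h2, le_trans h1 hx.2⟩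

/-- Splitting `∫₀¹ = ∫₀ˣ + ∫ₓ¹` for integrable functions. -/
lemma split_integral {f : ℝ → ℂ} (hf : Integrable f unitMeasure) {x : ℝ}
    (hx : x ∈ Icc (0:ℝ) 1) :
    (∫ t in Icc 0 x, f t ∂unitMeasure) + ∫ t in Icc x 1, f t ∂unitMeasure
      = ∫ t, f t ∂unitMeasure := by
  have h1 : (∫ t in Icc x 1, f t ∂unitMeasure) = ∫ t in Ioc x 1, f t ∂unitMeasure :=
    integral_Icc_eq_integral_Ioc
  rw [h1, ← setIntegral_union ((Set.Iic_disjoint_Ioc le_rfl).mono Set.Icc_subset_Iic_self le_rfl)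
      measurableSet_Ioc hf.integrableOn hf.integrableOn,
    Set.Icc_union_Ioc_eq_Icc hx.1 hx.2]
  conv_rhs => rw [← setIntegral_univ (μ := unitMeasure)]
  congr 1
  rw [unit_restrict _ measurableSet_Icc, Set.inter_self, ← unitMeasure,
    Measure.restrict_univ]

/-- Antiderivatives of polynomials over `ℂ`. -/
lemma exists_antideriv (p : Polynomial ℂ) :
    ∃ q : Polynomial ℂ, q.derivative = p ∧ q.natDegree ≤ p.natDegree + 1 := by
  refine ⟨p.sum fun i a => C (a / (i + 1)) * X ^ (i + 1), ?_, ?_⟩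
  · rw [Polynomial.sum, map_sum]
    conv_rhs => rw [← Polynomial.sum_C_mul_X_pow_eq p]
    rw [Polynomial.sum]
    refine Finset.sum_congr rfl fun i _ => ?_
    rw [derivative_C_mul_X_pow]
    have h1 : ((i : ℂ) + 1) ≠ 0 := Nat.cast_add_one_ne_zero i
    have : p.coeff i / (↑i + 1) * ↑(i + 1) = p.coeff i := by
      push_cast
      field_simp
    rw [this]
    simp
  · rw [Polynomial.sum]
    refine (Polynomial.natDegree_sum_le _ _).trans ?_
    rw [Finset.fold_max_le]
    refine ⟨Nat.zero_le _, fun i hi => ?_⟩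
    simp only [Function.comp_apply]
    refine (natDegree_mul_le).trans ?_
    simp only [natDegree_C, natDegree_X_pow, zero_add]
    exact Nat.succ_le_succ (Polynomial.le_natDegree_of_mem_supp i hi)

lemma integrable_conj {f : ℝ → ℂ} (h : Integrable f unitMeasure) :
    Integrable (fun x => (starRingEnd ℂ) (f x)) unitMeasure := by
  refine ⟨RCLike.continuous_conj.comp_aestronglyMeasurable h.1, ?_⟩
  simpa [HasFiniteIntegral] using h.2

/-- The key Fubini computation. -/
lemma swap_core {f g : ℝ → ℂ} (hf : Integrable f unitMeasure)
    (hg : Integrable g unitMeasure) :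
    ∫ x, (∫ t in Icc x 1, f t ∂unitMeasure) * g x ∂unitMeasure
      = ∫ t, f t * (∫ x in Icc 0 t, g x ∂unitMeasure) ∂unitMeasure := by
  set F : ℝ × ℝ → ℂ :=
    Set.indicator {q : ℝ × ℝ | q.1 ≤ q.2} (fun q => g q.1 * f q.2) with hF
  have hFint : Integrable F (unitMeasure.prod unitMeasure) :=
    (hg.mul_prod hf).indicator (measurableSet_le measurable_fst measurable_snd)
  have h1 : ∀ᵐ x ∂unitMeasure,
      (∫ t in Icc x 1, f t ∂unitMeasure) * g x = ∫ t, F (x, t) ∂unitMeasure := by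
    filter_upwards [ae_mem_unit] with x hx
    have he : (fun t => F (x, t)) = Set.indicator (Ici x) (fun t => g x * f t) := by
      ext t
      simp [hF, Set.indicator_apply, Set.mem_Ici]
    rw [he, integral_indicator measurableSet_Ici, unit_restrict_Ici hx,
      MeasureTheory.integral_const_mul, mul_comm]
  have h2 : ∀ᵐ t ∂unitMeasure,
      (∫ x, F (x, t) ∂unitMeasure) = f t * ∫ x in Icc 0 t, g x ∂unitMeasure := by
    filter_upwards [ae_mem_unit] with t ht
    have he : (fun x => F (x, t)) = Set.indicator (Iic t) (fun x => g x * f t) := by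
      ext x
      simp [hF, Set.indicator_apply, Set.mem_Iic]
    rw [he, integral_indicator measurableSet_Iic, unit_restrict_Iic ht,
      MeasureTheory.integral_mul_const, mul_comm]
  calc ∫ x, (∫ t in Icc x 1, f t ∂unitMeasure) * g x ∂unitMeasure
      = ∫ x, ∫ t, F (x, t) ∂unitMeasure ∂unitMeasure := integral_congr_ae h1
    _ = ∫ t, ∫ x, F (x, t) ∂unitMeasure ∂unitMeasure :=
        integral_integral_swap (f := fun x t => F (x, t)) hFint
    _ = ∫ t, f t * (∫ x in Icc 0 t, g x ∂unitMeasure) ∂unitMeasure :=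
        integral_congr_ae h2

/-! ### Properties of the Volterra operator -/

section Volterra
variable (T Tstar : Lp ℂ 2 unitMeasure →L[ℂ] Lp ℂ 2 unitMeasure)
    (hT : ∀ u : Lp ℂ 2 unitMeasure, ∀ᵐ x ∂unitMeasure,
      T u x = ∫ t in Set.Icc (0:ℝ) x, u t ∂unitMeasure)
    (hTstar : ∀ u : Lp ℂ 2 unitMeasure, ∀ᵐ x ∂unitMeasure,
      Tstar u x = ∫ t in Set.Icc x 1, u t ∂unitMeasure)

include hT hTstar in
lemma volterra_adjoint : Tstar = ContinuousLinearMap.adjoint T := by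
  rw [ContinuousLinearMap.eq_adjoint_iff]
  intro v u
  rw [L2.inner_def, L2.inner_def]
  simp only [RCLike.inner_apply']
  have l1 : ∀ᵐ x ∂unitMeasure, (starRingEnd ℂ) (Tstar v x) * u x
      = (∫ t in Icc x 1, (starRingEnd ℂ) (v t) ∂unitMeasure) * u x := by
    filter_upwards [hTstar v] with x h
    rw [h, ← integral_conj]
  have l2 : ∀ᵐ t ∂unitMeasure, (starRingEnd ℂ) (v t) * (T u t)
      = (starRingEnd ℂ) (v t) * ∫ x in Icc 0 t, u x ∂unitMeasure := by
    filter_upwards [hT u] with t h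
    rw [h]
  rw [integral_congr_ae l1, integral_congr_ae l2]
  exact swap_core (integrable_conj (Lp_integrable v)) (Lp_integrable u)

include hT hTstar in
lemma base_const (v : Lp ℂ 2 unitMeasure) :
    ∀ᵐ x ∂unitMeasure, (T v + Tstar v) x = ∫ t, v t ∂unitMeasure := by
  filter_upwards [hT v, hTstar v, Lp.coeFn_add (T v) (Tstar v), ae_mem_unit] with x h1 h2 h3 hx
  rw [h3, Pi.add_apply, h1, h2, split_integral (Lp_integrable v) hx]

include hT hTstar in
lemma poly_rep : ∀ (k : ℕ) (u : Lp ℂ 2 unitMeasure), ∃ p : Polynomial ℂ,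
    p.natDegree ≤ k ∧
    ∀ᵐ x ∂unitMeasure,
      ((T ^ (k+1)) u + ((-1:ℂ))^k • ((Tstar ^ (k+1)) u)) x = p.eval (x:ℂ) := by
  intro k
  induction k with
  | zero =>
    intro u
    refine ⟨Polynomial.C (∫ t, u t ∂unitMeasure), by simp, ?_⟩
    have he : (T ^ 1) u + ((-1:ℂ))^0 • ((Tstar ^ 1) u) = T u + Tstar u := by
      simp [pow_one]
    rw [he]
    filter_upwards [base_const T Tstar hT hTstar u] with x h
    rw [h]; simp
  | succ k ih =>
    intro u
    obtain ⟨p, hpdeg, hpae⟩ := ih u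
    obtain ⟨q, hq, hqdeg⟩ := exists_antideriv p
    set B := (Tstar ^ (k+1)) u with hB
    set w := (T ^ (k+1)) u + ((-1:ℂ))^k • B with hwdef
    set c := ∫ t, B t ∂unitMeasure with hc
    set z := T B + Tstar B with hz
    have hw : (T ^ (k+2)) u + ((-1:ℂ))^(k+1) • ((Tstar ^ (k+2)) u)
        = T w + ((-1:ℂ))^(k+1) • z := by
      have e1 : (T ^ (k+2)) u = T ((T ^ (k+1)) u) := by
        rw [pow_succ', ContinuousLinearMap.mul_apply]
      have e2 : (Tstar ^ (k+2)) u = Tstar B := by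
        rw [hB, pow_succ', ContinuousLinearMap.mul_apply]
      rw [e1, e2, hz, hwdef, map_add, _root_.map_smul]
      have hsgn : ((-1:ℂ))^(k+1) = -((-1:ℂ))^k := by ring
      rw [hsgn]
      module
    refine ⟨q - C (q.eval 0) + C (((-1:ℂ))^(k+1) * c), ?_, ?_⟩
    · refine (natDegree_add_le _ _).trans (max_le ((natDegree_sub_le _ _).trans
        (max_le (hqdeg.trans (by omega)) (le_of_eq_of_le (natDegree_C _) (Nat.zero_le _))))
        (le_of_eq_of_le (natDegree_C _) (Nat.zero_le _)))
    · rw [hw]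
      filter_upwards [hT w, base_const T Tstar hT hTstar B,
        Lp.coeFn_add (T w) (((-1:ℂ))^(k+1) • z), Lp.coeFn_smul (((-1:ℂ))^(k+1)) z,
        ae_mem_unit] with x h1 h2 h3 h4 hx
      rw [h3, Pi.add_apply, h4, Pi.smul_apply, h1, h2]
      have hcong : (∫ t in Icc (0:ℝ) x, w t ∂unitMeasure)
          = ∫ t in Icc (0:ℝ) x, p.eval (t:ℂ) ∂unitMeasure :=
        integral_congr_ae (ae_restrict_of_ae hpae)
      have hvol : (∫ t in Icc (0:ℝ) x, p.eval (t:ℂ) ∂unitMeasure)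
          = ∫ t in Icc (0:ℝ) x, p.eval (t:ℂ) ∂volume := by
        rw [unit_restrict_Icc0 hx]
      have hftc : (∫ t in Icc (0:ℝ) x, p.eval (t:ℂ) ∂volume)
          = q.eval (x:ℂ) - q.eval ((0:ℝ):ℂ) := by
        rw [integral_Icc_eq_integral_Ioc, ← intervalIntegral.integral_of_le hx.1]
        have hd : ∀ t : ℝ, HasDerivAt (fun y : ℝ => q.eval ((y:ℝ):ℂ))
            (p.eval ((t:ℝ):ℂ)) t := by
          intro t
          have hd := (Polynomial.hasDerivAt q ((t:ℝ):ℂ)).comp_ofReal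
          rw [hq] at hd
          exact hd
        have hcont : Continuous fun t : ℝ => p.eval ((t:ℝ):ℂ) :=
          (Polynomial.continuous p).comp Complex.continuous_ofReal
        exact intervalIntegral.integral_eq_sub_of_hasDerivAt
          (f := fun y : ℝ => q.eval ((y:ℝ):ℂ)) (fun t _ => hd t)
          (hcont.intervalIntegrable 0 x)
      rw [hcong, hvol, hftc]
      simp only [eval_add, eval_sub, eval_C, Complex.ofReal_zero, smul_eq_mul]
      rw [hc]

end Volterra

set_option maxHeartbeats 1000000 in
/-- Let `T` be the Volterra operator on `L²(0,1)` with adjoint `T*`, and `P⟨n⟩` the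
orthogonal projection onto polynomials of degree at most `n`.  Then (i) the operators
`(I - P⟨n⟩)Tⁿ⁺¹(T*)ⁿ⁺¹(I - P⟨n⟩)` (covariance of the `n`-th order detrended `n`-times
integrated Wiener process) and `Tⁿ⁺¹(I - P⟨n⟩)(T*)ⁿ⁺¹` (covariance of the bridged
`n`-times integrated Wiener process) have the same nonzero eigenvalues with
multiplicities; and (ii) `Tⁿ⁺¹(I - P⟨n⟩)(T*)ⁿ⁺¹ = (T*)ⁿ⁺¹(I - P⟨n⟩)Tⁿ⁺¹`. -/
theorem statement18 (n : ℕ)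
    (T Tstar Pn : Lp ℂ 2 unitMeasure →L[ℂ] Lp ℂ 2 unitMeasure)
    (hT : ∀ u : Lp ℂ 2 unitMeasure, ∀ᵐ x ∂unitMeasure,
      T u x = ∫ t in Set.Icc (0:ℝ) x, u t ∂unitMeasure)
    (hTstar : ∀ u : Lp ℂ 2 unitMeasure, ∀ᵐ x ∂unitMeasure,
      Tstar u x = ∫ t in Set.Icc x 1, u t ∂unitMeasure)
    -- `Pn` is idempotent and self-adjoint,
    (hPn1 : Pn ∘L Pn = Pn)
    (hPn2 : ContinuousLinearMap.adjoint Pn = Pn)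
    -- its range consists of polynomials of degree at most `n`,
    (hPn3 : ∀ u : Lp ℂ 2 unitMeasure, ∃ p : Polynomial ℂ, p.natDegree ≤ n ∧
      ∀ᵐ x ∂unitMeasure, Pn u x = p.eval (x : ℂ))
    -- and it fixes every polynomial of degree at most `n`.
    (hPn4 : ∀ (p : Polynomial ℂ) (u : Lp ℂ 2 unitMeasure), p.natDegree ≤ n →
      (∀ᵐ x ∂unitMeasure, u x = p.eval (x : ℂ)) → Pn u = u) :
    SameNonzeroEigenvalues
      ((1 - Pn) * T ^ (n + 1) * Tstar ^ (n + 1) * (1 - Pn))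
      (T ^ (n + 1) * (1 - Pn) * Tstar ^ (n + 1)) ∧
    T ^ (n + 1) * (1 - Pn) * Tstar ^ (n + 1)
      = Tstar ^ (n + 1) * (1 - Pn) * T ^ (n + 1) := by
  classical
  set c : ℂ := ((-1:ℂ))^n with hcdef
  set Q : Lp ℂ 2 unitMeasure →L[ℂ] Lp ℂ 2 unitMeasure := 1 - Pn with hQdef
  set D : Lp ℂ 2 unitMeasure →L[ℂ] Lp ℂ 2 unitMeasure
    := T ^ (n+1) + c • Tstar ^ (n+1) with hD
  have hPP : Pn * Pn = Pn := hPn1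
  have hQQ : Q * Q = Q := by
    rw [hQdef, mul_sub, mul_one, sub_mul, one_mul, hPP, sub_self, sub_zero]
  have hcc : c * c = 1 := by rw [hcdef, ← mul_pow]; norm_num
  have hc0 : c ≠ 0 := by rw [hcdef]; exact pow_ne_zero _ (by norm_num)
  -- `(1 - Pn) D = 0`
  have lem1 : Q * D = 0 := by
    ext u
    have hDu : D u = (T ^ (n+1)) u + c • ((Tstar ^ (n+1)) u) := by
      rw [hD]; simp [ContinuousLinearMap.add_apply, ContinuousLinearMap.smul_apply]
    obtain ⟨p, hpdeg, hpae⟩ := poly_rep T Tstar hT hTstar n u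
    have hfix : Pn (D u) = D u := by
      refine hPn4 p (D u) hpdeg ?_
      rw [hDu]
      exact hpae
    rw [hQdef]
    simp [ContinuousLinearMap.mul_apply, ContinuousLinearMap.sub_apply,
      ContinuousLinearMap.one_apply, ContinuousLinearMap.zero_apply, hfix]
  -- adjoints
  have hadj : Tstar = ContinuousLinearMap.adjoint T := volterra_adjoint T Tstar hT hTstar
  have hstarT : star T = Tstar := by rw [ContinuousLinearMap.star_eq_adjoint, hadj]
  have hstarTs : star Tstar = T := by
    rw [ContinuousLinearMap.star_eq_adjoint, hadj, ContinuousLinearMap.adjoint_adjoint]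
  have hstarPn : star Pn = Pn := by rw [ContinuousLinearMap.star_eq_adjoint, hPn2]
  have hstarc : star c = c := by rw [hcdef]; simp
  have hstarQ : star Q = Q := by rw [hQdef, star_sub, star_one, hstarPn]
  have hstarD : star D = c • D := by
    rw [hD]
    simp only [star_add, star_smul, star_pow, star_neg, star_one, hstarT, hstarTs]
    rw [hstarc, smul_add, smul_smul, hcc, one_smul]
    exact add_comm _ _
  -- `D (1 - Pn) = 0`
  have lem2 : D * Q = 0 := by
    have h0 := congrArg star lem1
    rw [star_mul, hstarQ, hstarD, star_zero, smul_mul_assoc] at h0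
    rcases smul_eq_zero.mp h0 with h | h
    · exact absurd h hc0
    · exact h
  have l1' : Q * T ^ (n+1) + c • (Q * Tstar ^ (n+1)) = 0 := by
    rw [← mul_smul_comm, ← mul_add, ← hD, lem1]
  have l2' : T ^ (n+1) * Q + c • (Tstar ^ (n+1) * Q) = 0 := by
    rw [← smul_mul_assoc, ← add_mul, ← hD, lem2]
  have eq1 : Q * Tstar ^ (n+1) = -(c • (Q * T ^ (n+1))) := by
    calc Q * Tstar ^ (n+1) = (c * c) • (Q * Tstar ^ (n+1)) := by rw [hcc, one_smul]
      _ = c • (c • (Q * Tstar ^ (n+1))) := by rw [smul_smul]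
      _ = c • (-(Q * T ^ (n+1))) := by rw [eq_neg_of_add_eq_zero_right l1']
      _ = -(c • (Q * T ^ (n+1))) := by rw [smul_neg]
  have eq2 : T ^ (n+1) * Q = -(c • (Tstar ^ (n+1) * Q)) := eq_neg_of_add_eq_zero_left l2'
  have assoc1 : ∀ (A B : Lp ℂ 2 unitMeasure →L[ℂ] Lp ℂ 2 unitMeasure),
      (A * Q) * (Q * B) = A * Q * B := by
    intro A B
    rw [mul_assoc A Q (Q * B), ← mul_assoc Q Q B, hQQ, ← mul_assoc]
  have hii : T ^ (n+1) * Q * Tstar ^ (n+1) = Tstar ^ (n+1) * Q * T ^ (n+1) := by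
    calc T ^ (n+1) * Q * Tstar ^ (n+1)
        = (T ^ (n+1) * Q) * (Q * Tstar ^ (n+1)) := (assoc1 _ _).symm
      _ = (-(c • (Tstar ^ (n+1) * Q))) * (-(c • (Q * T ^ (n+1)))) := by rw [eq2, eq1]
      _ = (c • (Tstar ^ (n+1) * Q)) * (c • (Q * T ^ (n+1))) := by rw [neg_mul_neg]
      _ = (c * c) • ((Tstar ^ (n+1) * Q) * (Q * T ^ (n+1))) := by
          rw [smul_mul_assoc, mul_smul_comm, smul_smul]
      _ = (Tstar ^ (n+1) * Q) * (Q * T ^ (n+1)) := by rw [hcc, one_smul]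
      _ = Tstar ^ (n+1) * Q * T ^ (n+1) := assoc1 _ _
  refine ⟨?_, hii⟩
  have hmain := sameNonzero_mul_comm (Q * T ^ (n+1)) (Tstar ^ (n+1) * Q)
  have hXY : (Q * T ^ (n+1)) * (Tstar ^ (n+1) * Q) = Q * T ^ (n+1) * Tstar ^ (n+1) * Q := by
    rw [← mul_assoc]
  have hYX : (Tstar ^ (n+1) * Q) * (Q * T ^ (n+1)) = T ^ (n+1) * Q * Tstar ^ (n+1) := by
    rw [assoc1, ← hii]
  rw [hXY, hYX] at hmain
  exact hmain
end
end
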